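/- Termination for HCP: if P ⊢ G then there is no infinite reduction sequence starting from P; i.e., the reduction relation restricted to well-typed processes is strongly normalizing. -/
import Mathlib


/-! # HCP: Hypersequent Classical Processes -/

/-- HCP session types. -/
inductive Ty : Type
  | tens : Ty → Ty → Ty
  | parr : Ty → Ty → Ty
  | plus : Ty → Ty → Ty
  | wth  : Ty → Ty → Ty
  | one  : Ty
  | bot  : Ty
  | zero : Ty
  | top  : Ty

/-- Duality on HCP session types. -/
def Ty.dual : Ty → Ty
  | .tens A B => .parr A.dual B.dual
  | .parr A B => .tens A.dual B.dual
  | .plus A B => .wth A.dual B.dual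
  | .wth A B  => .plus A.dual B.dual
  | .one => .bot
  | .bot => .one
  | .zero => .top
  | .top => .zero

/-- HCP process terms.  Endpoint names are natural numbers. -/
inductive Proc : Type
  | link : ℕ → ℕ → Proc                -- x ↔ y
  | halt : Proc                        -- terminated process 0
  | nu : ℕ → ℕ → Proc → Proc           -- (νxx')P, "cut"
  | par : Proc → Proc → Proc           -- P ∣ Q, "mix"
  | out : ℕ → ℕ → Proc → Proc          -- x[y].P   (bound output)
  | inp : ℕ → ℕ → Proc → Proc          -- x(y).P
  | close : ℕ → Proc → Proc            -- x[].P
  | wait : ℕ → Proc → Proc             -- x().P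
  | inl : ℕ → Proc → Proc              -- x◁inl.P
  | inr : ℕ → Proc → Proc              -- x◁inr.P
  | branch : ℕ → Proc → Proc → Proc    -- x▷{P;Q}
  | absurd : ℕ → Proc                  -- x▷{}

namespace Proc

/-- Rename the name `y` to `w` if `y = x`. -/
def subn (w x y : ℕ) : ℕ := if y = x then w else y

/-- Renaming `P[w/x]` of the free name `x` to `w` (stopping under binders for `x`). -/
def subst : Proc → ℕ → ℕ → Proc
  | link a b, w, x => link (subn w x a) (subn w x b)
  | halt, _, _ => halt
  | nu a b P, w, x => if a = x ∨ b = x then nu a b P else nu a b (P.subst w x)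
  | par P Q, w, x => par (P.subst w x) (Q.subst w x)
  | out a b P, w, x =>
      if b = x then out (subn w x a) b P else out (subn w x a) b (P.subst w x)
  | inp a b P, w, x =>
      if b = x then inp (subn w x a) b P else inp (subn w x a) b (P.subst w x)
  | close a P, w, x => close (subn w x a) (P.subst w x)
  | wait a P, w, x => wait (subn w x a) (P.subst w x)
  | inl a P, w, x => inl (subn w x a) (P.subst w x)
  | inr a P, w, x => inr (subn w x a) (P.subst w x)
  | branch a P Q, w, x => branch (subn w x a) (P.subst w x) (Q.subst w x)
  | absurd a, w, x => absurd (subn w x a)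

/-- Free names of a process. -/
def fn : Proc → Finset ℕ
  | link a b => {a, b}
  | halt => ∅
  | nu a b P => P.fn \ {a, b}
  | par P Q => P.fn ∪ Q.fn
  | out a b P => insert a (P.fn \ {b})
  | inp a b P => insert a (P.fn \ {b})
  | close a P => insert a P.fn
  | wait a P => insert a P.fn
  | inl a P => insert a P.fn
  | inr a P => insert a P.fn
  | branch a P Q => insert a (P.fn ∪ Q.fn)
  | absurd a => {a}

/-- Structural congruence of HCP processes: the congruence closure of
link symmetry, commutativity/associativity of `∣` with unit `0`,
garbage collection and commutation of name restriction, and scope extrusion. -/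
inductive Cong : Proc → Proc → Prop
  | refl (P) : Cong P P
  | symm : Cong P Q → Cong Q P
  | trans : Cong P Q → Cong Q R → Cong P R
  -- congruence rules
  | nu_congr : Cong P Q → Cong (nu a b P) (nu a b Q)
  | par_congr : Cong P P' → Cong Q Q' → Cong (par P Q) (par P' Q')
  | out_congr : Cong P Q → Cong (out a b P) (out a b Q)
  | inp_congr : Cong P Q → Cong (inp a b P) (inp a b Q)
  | close_congr : Cong P Q → Cong (close a P) (close a Q)
  | wait_congr : Cong P Q → Cong (wait a P) (wait a Q)
  | inl_congr : Cong P Q → Cong (inl a P) (inl a Q)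
  | inr_congr : Cong P Q → Cong (inr a P) (inr a Q)
  | branch_congr : Cong P P' → Cong Q Q' → Cong (branch a P Q) (branch a P' Q')
  -- axioms
  | link_comm (a b) : Cong (link a b) (link b a)
  | par_comm (P Q) : Cong (par P Q) (par Q P)
  | par_assoc (P Q R) : Cong (par P (par Q R)) (par (par P Q) R)
  | par_halt (P) : Cong (par P halt) P
  | nu_halt (a b) : Cong (nu a b halt) halt
  | nu_comm (a b c d P) : Cong (nu a b (nu c d P)) (nu c d (nu a b P))
  | scope_ext (a b P Q) : a ∉ P.fn → b ∉ P.fn →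
      Cong (nu a b (par P Q)) (par P (nu a b Q))

end Proc

/-- Typing environments: multisets of (endpoint, type) pairs. -/
abbrev Env : Type := Multiset (ℕ × Ty)

/-- Hyper-environments: multisets of environments. -/
abbrev Hyper : Type := Multiset Env

open Proc in
/-- The HCP typing judgement `P ⊢ G`, with structural rules Ax, Cut, H-Mix,
H-Mix₀ and the logical rules for ⊗, ⅋, 1, ⊥, ⊕, & and ⊤
(logical rules act on a single environment). -/
inductive Typed : Proc → Hyper → Prop
  | ax : Typed (link x y) {({(x, Ty.dual A), (y, A)} : Env)}
  | cut : Typed P (((x, A) ::ₘ Γ) ::ₘ ((x', Ty.dual A) ::ₘ Δ) ::ₘ G) →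
      Typed (nu x x' P) ((Γ + Δ) ::ₘ G)
  | mix : Typed P G → Typed Q H → Typed (par P Q) (G + H)
  | mix₀ : Typed halt (0 : Hyper)
  | tens : Typed P (((y, A) ::ₘ Γ) ::ₘ {((x, B) ::ₘ Δ)}) →
      Typed (out x y P) {((x, Ty.tens A B) ::ₘ (Γ + Δ))}
  | parr : Typed P {((y, A) ::ₘ (x, B) ::ₘ Γ)} →
      Typed (inp x y P) {((x, Ty.parr A B) ::ₘ Γ)}
  | one : Typed P (0 : Hyper) → Typed (close x P) {({(x, Ty.one)} : Env)}
  | bot : Typed P {Γ} → Typed (wait x P) {((x, Ty.bot) ::ₘ Γ)}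
  | plus₁ : Typed P {((x, A) ::ₘ Γ)} → Typed (inl x P) {((x, Ty.plus A B) ::ₘ Γ)}
  | plus₂ : Typed P {((x, B) ::ₘ Γ)} → Typed (inr x P) {((x, Ty.plus A B) ::ₘ Γ)}
  | wth : Typed P {((x, A) ::ₘ Γ)} → Typed Q {((x, B) ::ₘ Γ)} →
      Typed (branch x P Q) {((x, Ty.wth A B) ::ₘ Γ)}
  | top : Typed (absurd x) {((x, Ty.top) ::ₘ Γ)}

open Proc in
/-- Reduction of HCP processes: the link rule, the principal cut (β) rules,
closed under name restriction, parallel composition on the left, and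
structural congruence on both sides. -/
inductive Red : Proc → Proc → Prop
  | link_cut : Red (nu x x' (par (link w x) P)) (P.subst w x')
  | beta_tens_parr :
      Red (nu x x' (par (out x y P) (inp x' y' Q))) (nu x x' (nu y y' (par P Q)))
  | beta_one_bot : Red (nu x x' (par (close x P) (wait x' Q))) (par P Q)
  | beta_plus_wth₁ :
      Red (nu x x' (par (inl x P) (branch x' Q R))) (nu x x' (par P Q))
  | beta_plus_wth₂ :
      Red (nu x x' (par (inr x P) (branch x' Q R))) (nu x x' (par P R))
  | res : Red P P' → Red (nu x x' P) (nu x x' P')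
  | mix : Red P P' → Red (par P Q) (par P' Q)
  | congr : Proc.Cong P Q → Red Q Q' → Proc.Cong Q' P' → Red P P'

namespace Proc

/-- `P` acts on `x` when `x` is free in the outermost term constructor of `P`. -/
def ActsOn : Proc → ℕ → Prop
  | link a b, x => x = a ∨ x = b
  | halt, _ => False
  | nu _ _ _, _ => False
  | par _ _, _ => False
  | out a _ _, x => x = a
  | inp a _ _, x => x = a
  | close a _, x => x = a
  | wait a _, x => x = a
  | inl a _, x => x = a
  | inr a _, x => x = a
  | branch a _ _, x => x = a
  | absurd a, x => x = a

/-- `P` is a cut (name restriction) or a mix (parallel composition). -/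
def IsCutOrMix : Proc → Prop
  | nu _ _ _ => True
  | par _ _ => True
  | _ => False

/-- `P` is a link. -/
def IsLink : Proc → Prop
  | link _ _ => True
  | _ => False

/-- `(νx₁x₁')⋯(νxₙxₙ')Q` for the list `xs = [(x₁,x₁'),…,(xₙ,xₙ')]`. -/
def nuAll (xs : List (ℕ × ℕ)) (Q : Proc) : Proc :=
  xs.foldr (fun p acc => nu p.1 p.2 acc) Q

/-- `P₁ ∣ ⋯ ∣ Pₖ`. -/
def parAll : List Proc → Proc
  | [] => halt
  | [P] => P
  | P :: Ps => par P (parAll Ps)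

/-- The side conditions of canonical form for a decomposition
`(νx₁x₁')⋯(νxₙxₙ')(P₁ ∣ ⋯ ∣ P_{n+m+1})`: no `Pᵢ` is a cut or a mix, no `Pᵢ`
is a link acting on a bound channel, and no two `Pᵢ`, `Pⱼ` act on dual
endpoints of the same channel. -/
def CanonDecomp (xs : List (ℕ × ℕ)) (Ps : List Proc) : Prop :=
  xs.length < Ps.length ∧
  (∀ Pi ∈ Ps, ¬ Pi.IsCutOrMix) ∧
  (∀ Pi ∈ Ps, Pi.IsLink → ∀ p ∈ xs, ¬ Pi.ActsOn p.1 ∧ ¬ Pi.ActsOn p.2) ∧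
  (∀ i j : Fin Ps.length, i ≠ j → ∀ p ∈ xs,
    ¬ ((Ps.get i).ActsOn p.1 ∧ (Ps.get j).ActsOn p.2))

/-- A process is in canonical form if it is structurally congruent to a
decomposition satisfying `CanonDecomp`. -/
def Canonical (P : Proc) : Prop :=
  ∃ xs Ps, Cong P (nuAll xs (parAll Ps)) ∧ CanonDecomp xs Ps

end Proc

namespace Proc

/-- Count of action constructors. -/
def wt : Proc → ℕ
  | link _ _ => 1
  | halt => 0
  | nu _ _ P => wt P
  | par P Q => wt P + wt Q
  | out _ _ P => wt P + 1
  | inp _ _ P => wt P + 1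
  | close _ P => wt P + 1
  | wait _ P => wt P + 1
  | inl _ P => wt P + 1
  | inr _ P => wt P + 1
  | branch _ P Q => wt P + wt Q + 1
  | absurd _ => 1

lemma wt_subst (P : Proc) (w x : ℕ) : wt (P.subst w x) = wt P := by
  induction P generalizing w x <;> simp [subst, wt, *] <;> split <;> simp [wt, *]

lemma wt_cong {P Q : Proc} (h : Cong P Q) : wt P = wt Q := by
  induction h <;> simp [wt, *] <;> omega

lemma wt_red {P Q : Proc} (h : Red P Q) : wt Q < wt P := by
  induction h with
  | link_cut => simp [wt, wt_subst]
  | beta_tens_parr => simp [wt]; omega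
  | beta_one_bot => simp [wt]; omega
  | beta_plus_wth₁ => simp [wt]; omega
  | beta_plus_wth₂ => simp [wt]; omega
  | res _ ih => simpa [wt] using ih
  | mix _ ih => simp [wt]; omega
  | congr h1 _ h3 ih => rw [wt_cong h1, ← wt_cong h3]; exact ih

end Proc

/-- Termination for HCP: no infinite reduction sequence starts from a
well-typed process. -/
theorem hcp_termination (P : Proc) (G : Hyper) (hP : Typed P G) :
    ¬ ∃ f : ℕ → Proc, f 0 = P ∧ ∀ n, Red (f n) (f (n + 1)) := by
  rintro ⟨f, -, hf⟩
  have key : ∀ n, Proc.wt (f n) + n ≤ Proc.wt (f 0) := by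
    intro n
    induction n with
    | zero => simp
    | succ n ih => have := Proc.wt_red (hf n); omega
  have := key (Proc.wt (f 0) + 1)
  omega
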